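/- arXiv:1906.11689 — 7 statements merged into one kernel-verified Lean document; each statement's English description precedes it below -/
import Mathlib

section
/- If H is a verbally closed subgroup of a group G, then H ∩ G' = H', where G' and H' denote the derived (commutator) subgroups. Consequently H/H' is isomorphic to HG'/G'. -/
/-! An element `h` of `H ∩ G'` is a product of commutators `⁅a₁, b₁⁆ ⋯ ⁅aₖ, bₖ⁆` in `G`, so the
split equation `⁅x₁, x₂⁆ ⋯ ⁅x₂ₖ₋₁, x₂ₖ⁆ = h` is solvable in `G`; by verbal closedness it is
solvable in `H`, whence `h ∈ H'`. The isomorphism is then the first isomorphism theorem for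
`H → G/G'`, whose kernel is `H ∩ G' = H'`. -/

/-- `H` is a retract of `G`: some endomorphism of `G` with image in `H` fixes `H` pointwise. -/
def IsRetract {G : Type*} [Group G] (H : Subgroup G) : Prop :=
  ∃ ρ : G →* G, (∀ g, ρ g ∈ H) ∧ ∀ h ∈ H, ρ h = h

/-- Evaluation of a word with constants in `H` at an assignment `g` of the variables. -/
def wordEval {G : Type*} [Group G] {n : ℕ} (H : Subgroup G)
    (w : FreeGroup (Fin n ⊕ H)) (g : Fin n → G) : G :=
  FreeGroup.lift (Sum.elim g (fun h : H => (h : G))) w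

/-- `H` is algebraically closed in `G`: every finite system of equations with constants
in `H` that has a solution in `G` has a solution in `H`. -/
def IsAlgClosedSubgroup {G : Type*} [Group G] (H : Subgroup G) : Prop :=
  ∀ (n m : ℕ) (w : Fin m → FreeGroup (Fin n ⊕ H)) (h : Fin m → H),
    (∃ g : Fin n → G, ∀ i, wordEval H (w i) g = h i) →
    ∃ g : Fin n → G, (∀ j, g j ∈ H) ∧ ∀ i, wordEval H (w i) g = h i

/-- `H` is verbally closed in `G`: every split equation `w(x₁,…,xₙ) = h`, `h ∈ H`,
solvable in `G` is solvable in `H`. -/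
def IsVerballyClosed {G : Type*} [Group G] (H : Subgroup G) : Prop :=
  ∀ (n : ℕ) (w : FreeGroup (Fin n)) (h : G), h ∈ H →
    (∃ g : Fin n → G, FreeGroup.lift g w = h) →
    ∃ g : Fin n → G, (∀ j, g j ∈ H) ∧ FreeGroup.lift g w = h

/-- `H` is `l`-verbally closed in `G`: every system of `l` split equations with right-hand
sides in `H` that is solvable in `G` is solvable in `H`. -/
def IsLVerballyClosed {G : Type*} [Group G] (H : Subgroup G) (l : ℕ) : Prop :=
  ∀ (n : ℕ) (w : Fin l → FreeGroup (Fin n)) (h : Fin l → G), (∀ i, h i ∈ H) →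
    (∃ g : Fin n → G, ∀ i, FreeGroup.lift g (w i) = h i) →
    ∃ g : Fin n → G, (∀ j, g j ∈ H) ∧ ∀ i, FreeGroup.lift g (w i) = h i

theorem MonoidHom.apply_mem_commutator_of_range_le {F G : Type*} [Group F] [Group G]
    (f : F →* G) {K : Subgroup G} (hf : f.range ≤ K) {w : F} (hw : w ∈ commutator F) :
    f w ∈ ⁅K, K⁆ :=
  Subgroup.commutator_mono hf hf (map_commutator_eq (G := F) f ▸ Subgroup.mem_map_of_mem f hw)

namespace FreeGroup

variable {α β G : Type*} [Group G]

theorem lift_map_apply (f : α → β) (g : β → G) (w : FreeGroup α) :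
    lift g (map f w) = lift (g ∘ f) w := by
  rw [map_eq_lift, ← MonoidHom.comp_apply]
  congr 1
  ext
  simp

end FreeGroup

open FreeGroup commutatorElement in
theorem exists_lift_eq_of_mem_commutator {G : Type*} [Group G] {x : G}
    (hx : x ∈ commutator G) :
    ∃ (n : ℕ) (w : FreeGroup (Fin n)) (g : Fin n → G),
      w ∈ commutator (FreeGroup (Fin n)) ∧ lift g w = x := by
  rw [commutator_eq_closure] at hx
  induction hx using Subgroup.closure_induction with
  | mem x hx =>
    obtain ⟨a, b, rfl⟩ := hx
    refine ⟨2, ⁅of 0, of 1⁆, ![a, b], Subgroup.commutator_mem_commutator trivial trivial, ?_⟩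
    simp [map_commutatorElement]
  | one => exact ⟨0, 1, finZeroElim, one_mem _, map_one _⟩
  | mul x y _ _ hx hy =>
    obtain ⟨n, v, g, hv, rfl⟩ := hx
    obtain ⟨m, w, h, hw, rfl⟩ := hy
    have hmap {k : ℕ} (f : Fin k → Fin (n + m)) {u : FreeGroup (Fin k)}
        (hu : u ∈ commutator _) : map f u ∈ commutator _ :=
      (map f).apply_mem_commutator_of_range_le le_top hu
    refine ⟨n + m, map (Fin.castAdd m) v * map (Fin.natAdd n) w, Fin.append g h,
      mul_mem (hmap _ hv) (hmap _ hw), ?_⟩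
    simp [lift_map_apply, Function.comp_def]
  | inv x _ hx =>
    obtain ⟨n, w, g, hw, rfl⟩ := hx
    exact ⟨n, w⁻¹, g, inv_mem hw, map_inv _ _⟩

theorem IsVerballyClosed.inf_commutator_le {G : Type*} [Group G] {H : Subgroup G}
    (hH : IsVerballyClosed H) : H ⊓ commutator G ≤ ⁅H, H⁆ := by
  rintro x ⟨hxH, hxG⟩
  obtain ⟨n, w, g, hw, hgw⟩ := exists_lift_eq_of_mem_commutator hxG
  obtain ⟨g', hg'H, rfl⟩ := hH n w x hxH ⟨g, hgw⟩
  exact (FreeGroup.lift g').apply_mem_commutator_of_range_le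
    (FreeGroup.range_lift_le (Set.range_subset_iff.mpr hg'H)) hw

theorem Subgroup.commutator_le_inf_commutator {G : Type*} [Group G] (H : Subgroup G) :
    ⁅H, H⁆ ≤ H ⊓ _root_.commutator G :=
  le_inf H.commutator_le_self (Subgroup.commutator_mono le_top le_top)

noncomputable def Subgroup.abelianizationEquivMapOf {G : Type*} [Group G] {H : Subgroup G}
    (hH : H ⊓ _root_.commutator G = ⁅H, H⁆) :
    Abelianization H ≃* H.map (Abelianization.of : G →* Abelianization G) :=
  let φ : H →* Abelianization G := Abelianization.of.comp H.subtype
  have hker : φ.ker = _root_.commutator H := by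
    rw [← MonoidHom.comap_ker, Abelianization.ker_of, ← comap_map_eq_self_of_injective
      H.subtype_injective (_root_.commutator H), map_subtype_commutator, ← hH]
    exact (inf_subgroupOf_left _ H).symm
  have hrange : φ.range = H.map Abelianization.of := by
    rw [MonoidHom.range_comp, range_subtype]
  (QuotientGroup.quotientMulEquivOfEq hker.symm).trans
    ((QuotientGroup.quotientKerEquivRange φ).trans (MulEquiv.subgroupCongr hrange))

/-- If `H` is verbally closed in `G`, then `H ⊓ G' = H'`; consequently
`H/H'` is isomorphic to `HG'/G'` (the image of `H` in the abelianization of `G`). -/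
theorem verballyClosed_inf_commutator {G : Type*} [Group G] (H : Subgroup G)
    (hH : IsVerballyClosed H) :
    H ⊓ commutator G = ⁅H, H⁆ ∧
      Nonempty (Abelianization ↥H ≃*
        ↥(H.map (Abelianization.of : G →* Abelianization G))) := by
  have hinf : H ⊓ commutator G = ⁅H, H⁆ :=
    le_antisymm hH.inf_commutator_le H.commutator_le_inf_commutator
  exact ⟨hinf, ⟨Subgroup.abelianizationEquivMapOf hinf⟩⟩
end

section
/- Let G be a solvable group and H a verbally closed subgroup of G contained in the derived subgroup G'. Then H is trivial. -/
/-!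
Every element `h` of `G'` is a value of a product-of-commutators word
`⁅x₁, y₁⁆ ⋯ ⁅xₘ, yₘ⁆`. If `H ≤ G'` is verbally closed, that equation is solvable in `H`, so
`H ≤ ⁅H, H⁆`. Then `H` lies in every term of the derived series of `G`, and since `G` is
solvable, `H` is trivial.
-/

open scoped commutatorElement

section

variable {G : Type*} [Group G]

theorem exists_list_prod_commutatorElement_eq {x : G} (hx : x ∈ commutator G) :
    ∃ L : List (G × G), (L.map fun p => ⁅p.1, p.2⁆).prod = x := by
  rw [commutator_eq_closure] at hx
  induction hx using Subgroup.closure_induction_left with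
  | one => exact ⟨[], rfl⟩
  | mul_left _ hc _ _ ih =>
    obtain ⟨a, b, rfl⟩ := hc
    obtain ⟨L, rfl⟩ := ih
    exact ⟨(a, b) :: L, rfl⟩
  | inv_mul_cancel _ hc _ _ ih =>
    obtain ⟨a, b, rfl⟩ := hc
    obtain ⟨L, rfl⟩ := ih
    exact ⟨(b, a) :: L, by simp [commutatorElement_inv]⟩

def commutatorProdWord (m : ℕ) : FreeGroup (Fin (m + m)) :=
  (List.ofFn fun i => ⁅FreeGroup.of (Fin.castAdd m i), FreeGroup.of (Fin.natAdd m i)⁆).prod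

theorem lift_commutatorProdWord {m : ℕ} (g : Fin (m + m) → G) :
    FreeGroup.lift g (commutatorProdWord m) =
      (List.ofFn fun i => ⁅g (Fin.castAdd m i), g (Fin.natAdd m i)⁆).prod := by
  simp [commutatorProdWord, map_list_prod, List.map_ofFn, Function.comp_def,
    map_commutatorElement]

theorem exists_lift_commutatorProdWord_eq {x : G} (hx : x ∈ commutator G) :
    ∃ (m : ℕ) (g : Fin (m + m) → G), FreeGroup.lift g (commutatorProdWord m) = x := by
  obtain ⟨L, rfl⟩ := exists_list_prod_commutatorElement_eq hx
  refine ⟨L.length, Fin.append (fun i => L[i].1) (fun i => L[i].2), ?_⟩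
  rw [lift_commutatorProdWord]
  simp only [Fin.append_left, Fin.append_right]
  exact congrArg List.prod (List.ofFn_getElem_eq_map L fun p => ⁅p.1, p.2⁆)

theorem lift_commutatorProdWord_mem_commutator {K : Subgroup G} {m : ℕ} {g : Fin (m + m) → G}
    (hg : ∀ j, g j ∈ K) : FreeGroup.lift g (commutatorProdWord m) ∈ ⁅K, K⁆ := by
  rw [lift_commutatorProdWord]
  refine list_prod_mem fun y hy => ?_
  obtain ⟨i, rfl⟩ := List.mem_ofFn.mp hy
  exact Subgroup.commutator_mem_commutator (hg _) (hg _)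

theorem IsVerballyClosed.le_commutator_self {H : Subgroup G} (hH : IsVerballyClosed H)
    (hle : H ≤ commutator G) : H ≤ ⁅H, H⁆ := by
  intro h hh
  obtain ⟨m, g, hg⟩ := exists_lift_commutatorProdWord_eq (hle hh)
  obtain ⟨g', hg'H, rfl⟩ := hH _ _ h hh ⟨g, hg⟩
  exact lift_commutatorProdWord_mem_commutator hg'H

theorem Subgroup.le_derivedSeries_of_le_commutator_self {H : Subgroup G} (hH : H ≤ ⁅H, H⁆)
    (k : ℕ) : H ≤ derivedSeries G k := by
  induction k with
  | zero => exact le_top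
  | succ k ih => exact hH.trans (Subgroup.commutator_mono ih ih)

theorem Subgroup.eq_bot_of_le_commutator_self [Group.IsSolvable G] {H : Subgroup G}
    (hH : H ≤ ⁅H, H⁆) : H = ⊥ := by
  obtain ⟨k, hk⟩ := Group.IsSolvable.solvable (G := G)
  exact le_bot_iff.mp (hk ▸ Subgroup.le_derivedSeries_of_le_commutator_self hH k)

end

/-- A verbally closed subgroup of a solvable group contained in the derived subgroup
is trivial. -/
theorem verballyClosed_le_commutator_eq_bot {G : Type*} [Group G] [Group.IsSolvable G]
    (H : Subgroup G) (hH : IsVerballyClosed H) (hle : H ≤ commutator G) : H = ⊥ :=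
  Subgroup.eq_bot_of_le_commutator_self (hH.le_commutator_self hle)
end

section
/- Let F_2 be the free group of rank 2 with basis {f_1, f_2}. The element g = f_1 f_2^{-1} f_1^{-1} f_2 f_1 generates a cyclic subgroup that is a retract of F_2, but this cyclic subgroup is not a free factor of F_2. -/
/-- `H` is a free factor of `G`: `G` decomposes as a free product `H ∗ K`. -/
def IsFreeFactor {G : Type*} [Group G] (H : Subgroup G) : Prop :=
  ∃ K : Subgroup G, Function.Bijective (Monoid.Coprod.lift H.subtype K.subtype)

/-!
The endomorphism `f₁ ↦ g, f₂ ↦ 1` of `F₂` sends `g` to `g · 1 · g⁻¹ · 1 · g = g`, so `⟨g⟩` is a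
retract.

If `F₂ = ⟨g⟩ ∗ K`, a homomorphism `F₂ → Q` is the same as a pair of homomorphisms from `⟨g⟩ ≅ ℤ`
and from `K`, and the homomorphisms from `K` are exactly those from `F₂` killing `g`. Hence
`|Q|² = |Q| · #{(a, b) ∈ Q² | a b⁻¹ a⁻¹ b a = 1}`. For `Q = D₃` the right-hand count is `12`
(`a = 1` with any `b`, or `a` a rotation and `b` a reflection), and `36 ≠ 6 · 12`.
-/

open Subgroup

section

variable {G Q : Type*} [Group G] [Group Q]

theorem isRetract_zpowers_of_apply_eq_self {g : G} (ρ : G →* G) (hρ : ∀ x, ρ x ∈ zpowers g)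
    (hg : ρ g = g) : IsRetract (zpowers g) :=
  ⟨ρ, hρ, by rintro _ ⟨k, rfl⟩; simp [hg]⟩

theorem card_monoidHom_of_isFreeFactor {H : Subgroup G} (hH : IsFreeFactor H) :
    Nat.card (G →* Q) = Nat.card (H →* Q) * Nat.card {φ : G →* Q // H ≤ φ.ker} := by
  obtain ⟨K, hK⟩ := hH
  let E : (G →* Q) ≃ (H →* Q) × (K →* Q) :=
    (MulEquiv.ofBijective _ hK).monoidHomCongrLeftEquiv.symm.trans Monoid.Coprod.liftEquiv.symm
  have hE : ∀ φ, (E φ).1 = φ.comp H.subtype := fun φ => by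
    ext x; exact congrArg φ (Monoid.Coprod.lift_apply_inl _ _ x)
  have hker : {φ : G →* Q // H ≤ φ.ker} ≃ (K →* Q) :=
    (E.subtypeEquiv (q := fun p => p.1 = 1) fun φ => by
        rw [hE, MonoidHom.ext_iff]; exact ⟨fun h x => h x.2, fun h x hx => h ⟨x, hx⟩⟩).trans
      (Equiv.prodSubtypeFstEquivSubtypeProd.trans
        (Equiv.uniqueProd (K →* Q) {ψ : H →* Q // ψ = 1}))
  rw [Nat.card_congr E, Nat.card_prod, Nat.card_congr hker]

theorem card_zpowers_monoidHom {g : G} (hg : ¬IsOfFinOrder g) :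
    Nat.card (zpowers g →* Q) = Nat.card Q := by
  have : Infinite (zpowers g) := (infinite_zpowers.mpr hg).to_subtype
  exact (Nat.card_congr ((zpowersHom Q).trans intCyclicMulEquiv.monoidHomCongrLeftEquiv)).symm

theorem FreeGroup.card_monoidHom_zpowers_le_ker {α : Type*} (w : FreeGroup α) :
    Nat.card {φ : FreeGroup α →* Q // zpowers w ≤ φ.ker} =
      Nat.card {a : α → Q // FreeGroup.lift a w = 1} :=
  Nat.card_congr <| FreeGroup.lift.symm.subtypeEquiv fun φ => by
    rw [zpowers_le, MonoidHom.mem_ker]; conv_lhs => rw [← FreeGroup.lift.apply_symm_apply φ]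

end

theorem card_dihedralGroup_three_solutions :
    Nat.card {a : Fin 2 → DihedralGroup 3 // a 0 * (a 1)⁻¹ * (a 0)⁻¹ * a 1 * a 0 = 1} = 12 := by
  rw [Nat.card_eq_fintype_card]; decide

/-- In `F₂` with basis `f₁, f₂`, the element `g = f₁ f₂⁻¹ f₁⁻¹ f₂ f₁` generates a
cyclic subgroup that is a retract but not a free factor of `F₂`. -/
theorem retract_not_freeFactor :
    let f : Fin 2 → FreeGroup (Fin 2) := FreeGroup.of
    let g : FreeGroup (Fin 2) := f 0 * (f 1)⁻¹ * (f 0)⁻¹ * f 1 * f 0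
    IsRetract (Subgroup.zpowers g) ∧ ¬ IsFreeFactor (Subgroup.zpowers g) := by
  intro f g
  have lift_g {Q : Type} [Group Q] (a : Fin 2 → Q) :
      FreeGroup.lift a g = a 0 * (a 1)⁻¹ * (a 0)⁻¹ * a 1 * a 0 := by
    simp [g, f]
  constructor
  · refine isRetract_zpowers_of_apply_eq_self (FreeGroup.lift ![g, 1])
      (fun x => FreeGroup.range_lift_le ?_ ⟨x, rfl⟩) ?_
    · rintro _ ⟨i, rfl⟩
      fin_cases i
      exacts [mem_zpowers g, one_mem _]
    · simp [lift_g]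
  · intro hfree
    have hcount := card_monoidHom_of_isFreeFactor (Q := DihedralGroup 3) hfree
    have hg : ¬IsOfFinOrder g := not_isOfFinOrder_of_isMulTorsionFree (by decide)
    simp only [card_zpowers_monoidHom hg, FreeGroup.card_monoidHom_zpowers_le_ker, lift_g,
      card_dihedralGroup_three_solutions, Nat.card_congr FreeGroup.lift.symm, Nat.card_fun,
      Nat.card_fin, DihedralGroup.nat_card] at hcount
    norm_num at hcount
end

section
/- Let G be a group such that G/G' is a free abelian group of finite rank, and let H be a verbally closed subgroup of G. Then the image of H in G/G' is a direct factor of G/G'. -/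
/-
Write `A = G/G'` and `B` for the image of `H`. If `xⁿ ∈ B`, say `xⁿ = [h]` with `h ∈ H`
and `x = [g]`, then `h = gⁿ c` with `c` a product of commutators, so the split equation
`x₀ⁿ · ∏ ⁅x_{2i-1}, x_{2i}⁆ = h` has a solution in `G`, hence one in `H`; its `x₀` gives
`y ∈ B` with `yⁿ = xⁿ`. As `A ≅ ℤʳ` is torsion-free, `x = y ∈ B`, so `A/B` is torsion-free.
Being finitely generated over `ℤ` it is free, and `B` splits off.
-/

open scoped commutatorElement

theorem MonoidHom.map_mem_commutator {G G' : Type*} [Group G] [Group G'] (f : G →* G') {x : G}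
    (hx : x ∈ commutator G) : f x ∈ commutator G' := by
  have hfx := Subgroup.mem_map_of_mem f hx
  rw [map_commutator_eq] at hfx
  exact Subgroup.commutator_mono le_top le_top hfx

theorem FreeGroup.lift_map_apply_s9 {α β G : Type*} [Group G] (f : β → G) (e : α → β)
    (w : FreeGroup α) : FreeGroup.lift f (FreeGroup.map e w) = FreeGroup.lift (f ∘ e) w := by
  induction w using FreeGroup.induction_on <;> simp_all

theorem IsVerballyClosed.exists_solution {G : Type*} [Group G] {H : Subgroup G}
    (hH : IsVerballyClosed H) {ι : Type*} [Finite ι] (w : FreeGroup ι) (g : ι → G)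
    (hg : FreeGroup.lift g w ∈ H) :
    ∃ g' : ι → G, (∀ i, g' i ∈ H) ∧ FreeGroup.lift g' w = FreeGroup.lift g w := by
  obtain ⟨n, ⟨e⟩⟩ := Finite.exists_equiv_fin ι
  obtain ⟨g', hg'H, hg'⟩ := hH n (FreeGroup.map e w) _ hg
    ⟨g ∘ e.symm, by simp [FreeGroup.lift_map_apply_s9, Function.comp_assoc]⟩
  exact ⟨g' ∘ e, fun i => hg'H (e i), by rwa [FreeGroup.lift_map_apply_s9] at hg'⟩

theorem exists_lift_eq_of_mem_commutator_s9 {G : Type*} [Group G] {c : G}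
    (hc : c ∈ commutator G) :
    ∃ (ι : Type) (_ : Finite ι) (u : FreeGroup ι) (f : ι → G),
      u ∈ commutator (FreeGroup ι) ∧ FreeGroup.lift f u = c := by
  rw [commutator_eq_closure] at hc
  induction hc using Subgroup.closure_induction with
  | mem x hx =>
    obtain ⟨a, b, rfl⟩ := hx
    exact ⟨Fin 2, inferInstance, ⁅.of 0, .of 1⁆, ![a, b],
      Subgroup.commutator_mem_commutator trivial trivial, by simp [map_commutatorElement]⟩
  | one => exact ⟨Empty, inferInstance, 1, isEmptyElim, one_mem _, map_one _⟩
  | mul x y _ _ hx hy =>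
    obtain ⟨ι, _, u, f, hu, rfl⟩ := hx
    obtain ⟨κ, _, v, k, hv, rfl⟩ := hy
    exact ⟨ι ⊕ κ, inferInstance, .map .inl u * .map .inr v, Sum.elim f k,
      mul_mem ((FreeGroup.map _).map_mem_commutator hu) ((FreeGroup.map _).map_mem_commutator hv),
      by simp [FreeGroup.lift_map_apply_s9]⟩
  | inv x _ hx =>
    obtain ⟨ι, _, u, f, hu, rfl⟩ := hx
    exact ⟨ι, inferInstance, u⁻¹, f, inv_mem hu, map_inv _ _⟩

theorem IsVerballyClosed.exists_zpow_eq {G : Type*} [Group G] {H : Subgroup G}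
    (hH : IsVerballyClosed H) (x : Abelianization G) (n : ℤ)
    (hx : x ^ n ∈ H.map Abelianization.of) :
    ∃ y ∈ H.map Abelianization.of, y ^ n = x ^ n := by
  obtain ⟨g, rfl⟩ := QuotientGroup.mk_surjective x
  obtain ⟨h, hhH, hh⟩ := hx
  have hc : (g ^ n)⁻¹ * h ∈ commutator G := by
    rw [← Abelianization.ker_of, MonoidHom.mem_ker, map_mul, map_inv, map_zpow, hh]
    exact inv_mul_cancel _
  obtain ⟨ι, _, u, f, hu, hfu⟩ := exists_lift_eq_of_mem_commutator_s9 hc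
  have lift_w : ∀ k : Option ι → G, FreeGroup.lift k (.of none ^ n * .map some u) =
      k none ^ n * FreeGroup.lift (k ∘ some) u := by
    intro k
    simp [FreeGroup.lift_map_apply_s9]
  have hw : FreeGroup.lift (fun o => o.elim g f) (.of none ^ n * .map some u) = h := by
    rw [lift_w]
    change g ^ n * FreeGroup.lift f u = h
    rw [hfu, mul_inv_cancel_left]
  obtain ⟨k, hkH, hk⟩ := hH.exists_solution _ _ (hw ▸ hhH)
  refine ⟨Abelianization.of (k none), Subgroup.mem_map_of_mem _ (hkH none), ?_⟩
  have hu1 : Abelianization.of (FreeGroup.lift (k ∘ some) u) = 1 :=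
    Abelianization.commutator_subset_ker (Abelianization.of.comp (FreeGroup.lift _)) hu
  rw [hw, lift_w] at hk
  simpa [hu1, hh] using congrArg Abelianization.of hk

theorem IsVerballyClosed.mem_map_of_zpow_mem {G : Type*} [Group G]
    [IsMulTorsionFree (Abelianization G)] {H : Subgroup G} (hH : IsVerballyClosed H)
    {x : Abelianization G} {n : ℤ} (hn : n ≠ 0) (hx : x ^ n ∈ H.map Abelianization.of) :
    x ∈ H.map Abelianization.of := by
  obtain ⟨y, hy, hyx⟩ := hH.exists_zpow_eq x n hx
  rwa [← zpow_left_injective hn hyx]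

theorem Submodule.exists_isCompl_of_projective_quotient {R M : Type*} [Ring R] [AddCommGroup M]
    [Module R M] (S : Submodule R M) [Module.Projective R (M ⧸ S)] : ∃ C, IsCompl S C := by
  obtain ⟨s, hs⟩ := Module.projective_lifting_property S.mkQ LinearMap.id S.mkQ_surjective
  have hmkQs : ∀ q, S.mkQ (s q) = q := LinearMap.congr_fun hs
  have hproj : ∀ x, x - s (S.mkQ x) ∈ S := fun x => by
    rw [← Submodule.Quotient.mk_eq_zero, ← S.mkQ_apply, map_sub, hmkQs, sub_self]
  refine ⟨LinearMap.ker (LinearMap.codRestrict S (LinearMap.id - s ∘ₗ S.mkQ) hproj),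
    LinearMap.isCompl_of_proj fun x => ?_⟩
  ext
  simp [(Submodule.Quotient.mk_eq_zero S).2 x.2]

theorem Submodule.exists_isCompl_of_smul_mem {R M : Type*} [CommRing R] [IsDomain R]
    [IsPrincipalIdealRing R] [AddCommGroup M] [Module R M] [Module.Finite R M]
    (S : Submodule R M) (hS : ∀ (a : R) (m : M), a ≠ 0 → a • m ∈ S → m ∈ S) :
    ∃ C, IsCompl S C := by
  have : Module.IsTorsionFree R (M ⧸ S) := .of_smul_eq_zero fun a q haq => by
    obtain ⟨m, rfl⟩ := S.mkQ_surjective q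
    refine or_iff_not_imp_left.2 fun ha => ?_
    rw [S.mkQ_apply, ← Submodule.Quotient.mk_smul, Submodule.Quotient.mk_eq_zero] at haq
    exact (Submodule.Quotient.mk_eq_zero S).2 (hS a m ha haq)
  -- `M ⧸ S` is finitely generated and torsion-free over a PID, hence free and so projective.
  exact S.exists_isCompl_of_projective_quotient

theorem Subgroup.exists_isCompl_of_zpow_mem {A : Type*} [CommGroup A]
    [Module.Finite ℤ (Additive A)] (K : Subgroup A)
    (hK : ∀ (n : ℤ) (x : A), n ≠ 0 → x ^ n ∈ K → x ∈ K) : ∃ C, IsCompl K C := by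
  let Φ : Subgroup A ≃o Submodule ℤ (Additive A) :=
    Subgroup.toAddSubgroup.trans AddSubgroup.toIntSubmodule
  obtain ⟨C, hC⟩ := (Φ K).exists_isCompl_of_smul_mem fun n m hn hm => hK n m.toMul hn hm
  exact ⟨Φ.symm C, by simpa using Φ.symm.isCompl hC⟩

/-- If `G/G'` is free abelian of finite rank and `H` is verbally closed in `G`, then the
image of `H` in `G/G'` is a direct factor. -/
theorem verballyClosed_image_directFactor {G : Type*} [Group G] (r : ℕ)
    (hfree : Nonempty (Abelianization G ≃* Multiplicative (Fin r → ℤ)))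
    (H : Subgroup G) (hH : IsVerballyClosed H) :
    ∃ C : Subgroup (Abelianization G),
      (H.map (Abelianization.of : G →* Abelianization G)) ⊓ C = ⊥ ∧
      (H.map (Abelianization.of : G →* Abelianization G)) ⊔ C = ⊤ := by
  obtain ⟨e⟩ := hfree
  have : IsMulTorsionFree (Abelianization G) := e.injective.isMulTorsionFree e.toMonoidHom
  have : Module.Finite ℤ (Additive (Abelianization G)) :=
    Module.Finite.equiv e.toAdditive.toIntLinearEquiv.symm
  obtain ⟨C, hC⟩ := (H.map Abelianization.of).exists_isCompl_of_zpow_mem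
    fun _ _ hn => hH.mem_map_of_zpow_mem hn
  exact ⟨C, hC.inf_eq_bot, hC.sup_eq_top⟩
end

section
/- Let G be the free solvable group S_{r,d} of finite rank r and solvability class d, and let H = ⟨h⟩ be a nontrivial cyclic subgroup of G. Then the following are equivalent: (1) H is verbally closed in G; (2) H is a retract of G; (3) the image of h in the abelianization G/G' (a free abelian group of rank r) is a primitive element (part of a basis). -/
instance (r d : ℕ) : (derivedSeries (FreeGroup (Fin r)) d).Normal :=
  derivedSeries_normal _ _

/-- The free solvable group `S_{r,d}` of rank `r` and derived length `d`. -/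
abbrev FreeSolvable (r d : ℕ) : Type :=
  FreeGroup (Fin r) ⧸ derivedSeries (FreeGroup (Fin r)) d

/-- The canonical basis of the free solvable group. -/
def FreeSolvable.gen (r d : ℕ) (i : Fin r) : FreeSolvable r d :=
  QuotientGroup.mk (FreeGroup.of i)

/-- The minimal number of generators of the subgroup `B` equals `k`. -/
def SubgroupRank {A : Type*} [Group A] (B : Subgroup A) (k : ℕ) : Prop :=
  IsLeast {n : ℕ | ∃ f : Fin n → A, Subgroup.closure (Set.range f) = B} k


open Subgroup Multiplicative

theorem IsRetract.isVerballyClosed {G : Type*} [Group G] {H : Subgroup G} (hH : IsRetract H) :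
    IsVerballyClosed H := by
  obtain ⟨ρ, hρH, hρ⟩ := hH
  rintro n w h hh ⟨g, rfl⟩
  refine ⟨ρ ∘ g, fun j => hρH (g j), ?_⟩
  rw [← hρ _ hh]
  exact (FreeGroup.lift_unique (ρ.comp (FreeGroup.lift g)) fun _ => by simp).symm

theorem isRetract_zpowers_of_map_eq_ofAdd_one {G : Type*} [Group G] {h : G}
    (ψ : G →* Multiplicative ℤ) (hψ : ψ h = ofAdd 1) : IsRetract (zpowers h) := by
  refine ⟨(zpowersHom G h).comp ψ, fun g => ⟨_, rfl⟩, ?_⟩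
  rintro _ ⟨m, rfl⟩
  simp [hψ]

theorem IsVerballyClosed.exists_zpow_eq_self {G : Type*} [Group G] {h : G}
    (hvc : IsVerballyClosed (zpowers h)) {n : ℕ} (w : FreeGroup (Fin n)) (g : Fin n → G)
    (hg : FreeGroup.lift g w = h) :
    ∃ ψ : FreeGroup (Fin n) →* Multiplicative ℤ, h ^ toAdd (ψ w) = h := by
  obtain ⟨g', hg'H, hg'⟩ := hvc n w h (mem_zpowers h) ⟨g, hg⟩
  choose k hk using fun j => mem_zpowers_iff.mp (hg'H j)
  refine ⟨FreeGroup.lift (ofAdd ∘ k), ?_⟩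
  have hfactor : FreeGroup.lift g' = (zpowersHom G h).comp (FreeGroup.lift (ofAdd ∘ k)) :=
    FreeGroup.ext_hom _ _ fun j => by simp [hk]
  calc h ^ toAdd (FreeGroup.lift (ofAdd ∘ k) w) = FreeGroup.lift g' w := by rw [hfactor]; rfl
    _ = h := hg'

-- `FreeAbelianGroup α` is by definition `Additive (Abelianization (FreeGroup α))`.
theorem Abelianization.eq_zero_or_eq_one_of_zpow_eq_one_freeGroup {α : Type*}
    {a : Abelianization (FreeGroup α)} {m : ℤ} (ha : a ^ m = 1) : m = 0 ∨ a = 1 :=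
  (smul_eq_zero (R := ℤ) (M := FreeAbelianGroup α) (m := Additive.ofMul a)).mp ha

theorem derivedSeries_succ_le_commutator (G : Type*) [Group G] (d : ℕ) :
    derivedSeries G (d + 1) ≤ commutator G :=
  derivedSeries_one G ▸ derivedSeries_antitone G (Nat.le_add_left 1 d)

theorem exists_map_eq_ofAdd_one_of_isVerballyClosed {r : ℕ} {N : Subgroup (FreeGroup (Fin r))}
    [N.Normal] (hN : N ≤ commutator (FreeGroup (Fin r))) {h : FreeGroup (Fin r) ⧸ N}
    (hne : h ≠ 1) (hvc : IsVerballyClosed (zpowers h)) :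
    ∃ ψ : FreeGroup (Fin r) ⧸ N →* Multiplicative ℤ, ψ h = ofAdd 1 := by
  obtain ⟨x, rfl⟩ := QuotientGroup.mk_surjective h
  have hx : FreeGroup.lift (fun i => (FreeGroup.of i : FreeGroup (Fin r) ⧸ N)) x = x :=
    (FreeGroup.lift_unique (QuotientGroup.mk' N) fun _ => rfl).symm
  obtain ⟨ψ, hψ⟩ := hvc.exists_zpow_eq_self x _ hx
  refine ⟨QuotientGroup.lift N ψ (hN.trans (Abelianization.commutator_subset_ker ψ)), ?_⟩
  rw [QuotientGroup.lift_mk]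
  have hpow : Abelianization.of x ^ (toAdd (ψ x) - 1) = 1 := by
    rw [← map_zpow, ← MonoidHom.mem_ker, Abelianization.ker_of]
    refine hN ((QuotientGroup.eq_one_iff _).mp ?_)
    rw [QuotientGroup.mk_zpow, zpow_sub_one, hψ, mul_inv_cancel]
  rcases Abelianization.eq_zero_or_eq_one_of_zpow_eq_one_freeGroup hpow with ht | hab
  · exact toAdd.injective (sub_eq_zero.mp ht)
  · rw [← MonoidHom.mem_ker, Abelianization.ker_of] at hab
    have hψx : ψ x = 1 := Abelianization.commutator_subset_ker ψ hab
    refine absurd ?_ hne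
    rw [← hψ, hψx, toAdd_one, zpow_zero]

/-- For a nontrivial cyclic subgroup `⟨h⟩` of the free solvable group `S_{r,d}`, being
verbally closed, being a retract, and primitivity of the image of `h` in the
abelianization are all equivalent. -/
theorem cyclic_verballyClosed_iff (r d : ℕ) (h : FreeSolvable r d) (hne : h ≠ 1) :
    (IsVerballyClosed (Subgroup.zpowers h) ↔ IsRetract (Subgroup.zpowers h)) ∧
    (IsRetract (Subgroup.zpowers h) ↔
      ∃ φ : Abelianization (FreeSolvable r d) →* Multiplicative ℤ,
        φ (Abelianization.of h) = Multiplicative.ofAdd 1) := by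
  have hprim_retract : (∃ φ : Abelianization (FreeSolvable r d) →* Multiplicative ℤ,
      φ (Abelianization.of h) = ofAdd 1) → IsRetract (zpowers h) :=
    fun ⟨φ, hφ⟩ => isRetract_zpowers_of_map_eq_ofAdd_one (φ.comp Abelianization.of) hφ
  have hvc_prim : IsVerballyClosed (zpowers h) → ∃ φ : Abelianization (FreeSolvable r d) →*
      Multiplicative ℤ, φ (Abelianization.of h) = ofAdd 1 := by
    intro hvc
    cases d with
    | zero =>
      obtain ⟨x, rfl⟩ := QuotientGroup.mk_surjective h
      exact absurd ((QuotientGroup.eq_one_iff x).mpr (by simp)) hne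
    | succ d =>
      obtain ⟨ψ, hψ⟩ := exists_map_eq_ofAdd_one_of_isVerballyClosed
        (derivedSeries_succ_le_commutator _ d) hne hvc
      exact ⟨Abelianization.lift ψ, by rw [Abelianization.lift_apply_of, hψ]⟩
  exact ⟨⟨fun hvc => hprim_retract (hvc_prim hvc), IsRetract.isVerballyClosed⟩,
    ⟨fun hr => hvc_prim hr.isVerballyClosed, hprim_retract⟩⟩
end

section
/- Let M_2 be the free metabelian group of rank 2 with basis {z_1, z_2}. If g_1, g_2 ∈ M_2 satisfy [[g_1, g_2], g_2], g_1] = [[[z_1, z_2], z_2], z_1], then g_i ≡ z_i^{ε_i} (mod M_2') with ε_i ∈ {±1} for i = 1, 2. -/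
open scoped commutatorElement

/-!
Map `M₂` to the affine group of `ℤ⟦X⟧` by `z₁ ↦ (x ↦ (1 + X)^σ x + 1)` and
`z₂ ↦ (x ↦ (1 + X)^τ x + 1)`. Commutators are translations, and the translation part of
`[A, B, B, A]` is divisible by `X³`. If `g₁ ≡ z₁^a z₂^b` and `g₂ ≡ z₁^c z₂^d` modulo `M₂'`, the
`X³`-coefficient of the image of `[g₁, g₂, g₂, g₁]` is `k j (k (c + d) - j (a + b))` with
`k = σ a + τ b`, `j = σ c + τ d`; for the basis it is `σ τ (σ - τ)`. Equating these cubic forms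
at `(σ, τ) = (1, 0), (0, 1), (1, -1)` gives `a c Δ = b d Δ = 0` and `(a d + b c) Δ = 1` for
`Δ = a d - b c`, whence `b = c = 0` and `a, d = ±1`.
-/

theorem Int.diagonal_signs_of_forall_cubic_identity {a b c d : ℤ}
    (h : ∀ σ τ : ℤ, (σ * a + τ * b) * (σ * c + τ * d) *
      ((σ * a + τ * b) * (c + d) - (σ * c + τ * d) * (a + b)) = σ * τ * (σ - τ)) :
    (a = 1 ∨ a = -1) ∧ b = 0 ∧ c = 0 ∧ (d = 1 ∨ d = -1) := by
  have hac : a * c * (a * d - b * c) = 0 := by linear_combination h 1 0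
  have hbd : b * d * (a * d - b * c) = 0 := by linear_combination -h 0 1
  have hdet : (a * d + b * c) * (a * d - b * c) = 1 :=
    mul_left_cancel₀ two_ne_zero (by linear_combination -h 1 (-1) + 2 * hac + 2 * hbd)
  have he : IsUnit (a * d - b * c) := .of_mul_eq_one_right _ hdet
  have hbc : b * c = 0 := by
    have h2bc : (2 * (b * c)) * (a * d - b * c) = 0 := by
      linear_combination hdet - Int.isUnit_mul_self he
    simpa using he.mul_left_eq_zero.mp h2bc
  have had : IsUnit (a * d) := by simpa [hbc] using he
  have ha : IsUnit a := isUnit_of_mul_isUnit_left had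
  have hd : IsUnit d := isUnit_of_mul_isUnit_right had
  exact ⟨Int.isUnit_iff.mp ha, hd.mul_left_eq_zero.mp (he.mul_left_eq_zero.mp hbd),
    ha.mul_right_eq_zero.mp (he.mul_left_eq_zero.mp hac), Int.isUnit_iff.mp hd⟩

namespace FreeSolvable

variable {r d : ℕ} {G : Type*} [Group G]

def lift (hG : derivedSeries G d = ⊥) (x : Fin r → G) : FreeSolvable r d →* G :=
  QuotientGroup.lift _ (FreeGroup.lift x) fun g hg => by
    have := map_derivedSeries_le_derivedSeries (FreeGroup.lift x) d (Subgroup.mem_map_of_mem _ hg)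
    rwa [hG, Subgroup.mem_bot, ← MonoidHom.mem_ker] at this

@[simp]
theorem lift_gen (hG : derivedSeries G d = ⊥) (x : Fin r → G) (i : Fin r) :
    lift hG x (gen r d i) = x i := by
  rw [lift, gen, QuotientGroup.lift_mk, FreeGroup.lift_apply_of]

theorem hom_ext {f g : FreeSolvable r d →* G} (h : ∀ i, f (gen r d i) = g (gen r d i)) : f = g :=
  QuotientGroup.monoidHom_ext _ (FreeGroup.ext_hom _ _ h)

def AbelianExponents (g : FreeSolvable 2 d) (a b : ℤ) : Prop :=
  Abelianization.of g = Abelianization.of (gen 2 d 0) ^ a * Abelianization.of (gen 2 d 1) ^ b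

theorem exists_abelianExponents (g : FreeSolvable 2 d) : ∃ a b : ℤ, g.AbelianExponents a b := by
  simp_rw [AbelianExponents, eq_comm (a := Abelianization.of g), ← Subgroup.mem_closure_pair]
  obtain ⟨g, rfl⟩ := QuotientGroup.mk_surjective g
  induction g using FreeGroup.induction_on with
  | C1 => exact one_mem _
  | of i => fin_cases i <;> exact Subgroup.subset_closure (by simp [gen])
  | inv_of i h => simpa using inv_mem h
  | mul g h hg hh => simpa using mul_mem hg hh

theorem map_eq_zpow_mul_zpow {H : Type*} [CommGroup H] (f : FreeSolvable 2 d →* H)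
    {g : FreeSolvable 2 d} {a b : ℤ} (h : g.AbelianExponents a b) :
    f g = f (gen 2 d 0) ^ a * f (gen 2 d 1) ^ b := by
  simpa using congrArg (Abelianization.lift f) h

end FreeSolvable

theorem derivedSeries_eq_bot_of_commGroup {G : Type*} [CommGroup G] {n : ℕ} (hn : n ≠ 0) :
    derivedSeries G n = ⊥ :=
  le_bot_iff.mp <| (derivedSeries_antitone G (Nat.one_le_iff_ne_zero.mpr hn)).trans
    (by rw [derivedSeries_one, commutator_eq_bot])

/-- `⟨u, m⟩` stands for the affine map `x ↦ u * x + m`. -/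
@[ext]
structure Aff (S : Type*) [CommRing S] where
  u : Sˣ
  m : S

namespace Aff

variable {S S' : Type*} [CommRing S] [CommRing S']

instance : Mul (Aff S) := ⟨fun A B => ⟨A.u * B.u, A.m + A.u * B.m⟩⟩
instance : One (Aff S) := ⟨⟨1, 0⟩⟩
instance : Inv (Aff S) := ⟨fun A => ⟨A.u⁻¹, -(A.u⁻¹ * A.m)⟩⟩

@[simp] theorem mul_u (A B : Aff S) : (A * B).u = A.u * B.u := rfl
@[simp] theorem mul_m (A B : Aff S) : (A * B).m = A.m + A.u * B.m := rfl
@[simp] theorem one_u : (1 : Aff S).u = 1 := rfl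
@[simp] theorem one_m : (1 : Aff S).m = 0 := rfl
@[simp] theorem inv_u (A : Aff S) : A⁻¹.u = A.u⁻¹ := rfl
@[simp] theorem inv_m (A : Aff S) : A⁻¹.m = -(A.u⁻¹ * A.m) := rfl

instance : Group (Aff S) where
  mul_assoc A B C := by ext <;> simp [mul_assoc, mul_add, add_assoc]
  one_mul A := by ext <;> simp
  mul_one A := by ext <;> simp
  inv_mul_cancel A := by ext <;> simp

def uHom : Aff S →* Sˣ where
  toFun := u
  map_one' := rfl
  map_mul' _ _ := rfl

def map (f : S →+* S') : Aff S →* Aff S' where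
  toFun A := ⟨Units.map f A.u, f A.m⟩
  map_one' := by ext <;> simp
  map_mul' A B := by ext <;> simp

@[simp] theorem map_u (f : S →+* S') (A : Aff S) : (map f A).u = Units.map f A.u := rfl
@[simp] theorem map_m (f : S →+* S') (A : Aff S) : (map f A).m = f A.m := rfl

def translationHom : Multiplicative S →* Aff S where
  toFun x := ⟨1, x.toAdd⟩
  map_one' := rfl
  map_mul' x y := by ext <;> simp

theorem commutatorElement_eq (A B : Aff S) :
    ⁅A, B⁆ = ⟨1, (1 - B.u) * A.m + (A.u - 1) * B.m⟩ := by
  rw [commutatorElement_def, mul_inv_eq_iff_eq_mul, mul_inv_eq_iff_eq_mul]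
  ext
  · simp [mul_comm]
  · simp only [mul_m, mul_u, Units.val_one, one_mul]; ring

theorem derivedSeries_two_eq_bot : derivedSeries (Aff S) 2 = ⊥ := by
  have hker : commutator (Aff S) ≤ uHom.ker := Abelianization.commutator_subset_ker _
  rw [derivedSeries_succ, derivedSeries_one, ← le_bot_iff]
  refine (Subgroup.commutator_mono hker hker).trans (Subgroup.commutator_le.mpr ?_)
  intro A hA B hB
  rw [MonoidHom.mem_ker] at hA hB
  rw [Subgroup.mem_bot, commutatorElement_eq]
  ext <;> simp_all [uHom]

end Aff

open PowerSeries

namespace PowerSeries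

variable {R : Type*} [CommRing R]

theorem exists_val_zpow_eq_one_add_X_mul {u : R⟦X⟧ˣ} {δ : R⟦X⟧} (hu : (u : R⟦X⟧) = 1 + X * δ)
    (k : ℤ) : ∃ δ' : R⟦X⟧,
      ((u ^ k : R⟦X⟧ˣ) : R⟦X⟧) = 1 + X * δ' ∧ constantCoeff δ' = k * constantCoeff δ := by
  have hinv : (↑u⁻¹ : R⟦X⟧) = 1 + X * -(δ * (↑u⁻¹ : R⟦X⟧)) := by
    linear_combination u.mul_inv - (↑u⁻¹ : R⟦X⟧) * hu
  have hcc : constantCoeff (↑u⁻¹ : R⟦X⟧) = 1 := by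
    rw [hinv]; simp
  induction k using Int.induction_on with
  | zero => exact ⟨0, by simp⟩
  | succ k ih =>
    obtain ⟨δ', h, hc⟩ := ih
    refine ⟨δ' + δ + X * δ' * δ, ?_, ?_⟩
    · rw [zpow_add_one, Units.val_mul, h, hu]; ring
    · simp only [map_add, map_mul, constantCoeff_X, hc]; push_cast; ring
  | pred k ih =>
    obtain ⟨δ', h, hc⟩ := ih
    refine ⟨δ' - δ * (↑u⁻¹ : R⟦X⟧) - X * δ' * (δ * (↑u⁻¹ : R⟦X⟧)), ?_, ?_⟩
    · rw [zpow_sub_one, Units.val_mul, h]; linear_combination (1 + X * δ') * hinv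
    · simp only [map_sub, map_mul, constantCoeff_X, hc, hcc]; push_cast; ring

noncomputable def unitOneAddX : R⟦X⟧ˣ := (isUnit_iff_constantCoeff (φ := 1 + X).mpr (by simp)).unit

@[simp] theorem val_unitOneAddX : (unitOneAddX : R⟦X⟧ˣ) = (1 + X : R⟦X⟧) := IsUnit.unit_spec _

@[simp] theorem map_constantCoeff_unitOneAddX :
    Units.map (constantCoeff (R := R) : R⟦X⟧ →* R) unitOneAddX = 1 :=
  Units.ext (by simp)

end PowerSeries

theorem Aff.coeff_three_commutatorElement {R : Type*} [CommRing R] {A B : Aff R⟦X⟧}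
    {δ ε : R⟦X⟧} (hA : (A.u : R⟦X⟧) = 1 + X * δ) (hB : (B.u : R⟦X⟧) = 1 + X * ε) :
    coeff 3 ⁅⁅⁅A, B⁆, B⁆, A⁆.m = constantCoeff δ * constantCoeff ε *
      (constantCoeff δ * constantCoeff B.m - constantCoeff ε * constantCoeff A.m) := by
  have hX3 : ⁅⁅⁅A, B⁆, B⁆, A⁆.m = X ^ 3 * (δ * ε * (δ * B.m - ε * A.m)) := by
    simp only [Aff.commutatorElement_eq, Units.val_one, sub_self, zero_mul, add_zero, hA, hB]
    ring
  rw [hX3, ← zero_add 3, coeff_X_pow_mul, coeff_zero_eq_constantCoeff_apply]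
  simp

noncomputable def affineRep (σ τ : ℤ) : FreeSolvable 2 2 →* Aff ℤ⟦X⟧ :=
  FreeSolvable.lift Aff.derivedSeries_two_eq_bot ![⟨unitOneAddX ^ σ, 1⟩, ⟨unitOneAddX ^ τ, 1⟩]

def FreeSolvable.exponentSum (r d : ℕ) : FreeSolvable r (d + 1) →* Multiplicative ℤ :=
  FreeSolvable.lift (derivedSeries_eq_bot_of_commGroup d.succ_ne_zero) fun _ => .ofAdd 1

theorem exists_affineRep_u_eq {g : FreeSolvable 2 2} {a b : ℤ} (h : g.AbelianExponents a b)
    (σ τ : ℤ) : ∃ δ : ℤ⟦X⟧,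
    ((affineRep σ τ g).u : ℤ⟦X⟧) = 1 + X * δ ∧ constantCoeff δ = σ * a + τ * b := by
  have hu : (affineRep σ τ g).u = unitOneAddX ^ (σ * a + τ * b) := by
    have := FreeSolvable.map_eq_zpow_mul_zpow (Aff.uHom.comp (affineRep σ τ)) h
    simpa [affineRep, Aff.uHom, zpow_add, zpow_mul] using this
  simpa [hu] using exists_val_zpow_eq_one_add_X_mul (u := (unitOneAddX : ℤ⟦X⟧ˣ)) (δ := 1)
    (by rw [val_unitOneAddX, mul_one]) (σ * a + τ * b)

theorem constantCoeff_affineRep_m {g : FreeSolvable 2 2} {a b : ℤ} (h : g.AbelianExponents a b)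
    (σ τ : ℤ) : constantCoeff (affineRep σ τ g).m = a + b := by
  have hcomp : (Aff.map constantCoeff).comp (affineRep σ τ) =
      Aff.translationHom.comp (FreeSolvable.exponentSum 2 1) :=
    FreeSolvable.hom_ext fun i => by
      fin_cases i <;> ext <;> simp [affineRep, FreeSolvable.exponentSum, Aff.translationHom]
  have := congrArg (fun f => (f g).m) hcomp
  simp only [MonoidHom.comp_apply, Aff.map_m] at this
  rw [this, FreeSolvable.map_eq_zpow_mul_zpow _ h]
  simp [FreeSolvable.exponentSum, Aff.translationHom]

theorem coeff_three_affineRep_commutatorElement {g₁ g₂ : FreeSolvable 2 2} {a b c d : ℤ}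
    (h₁ : g₁.AbelianExponents a b) (h₂ : g₂.AbelianExponents c d) (σ τ : ℤ) :
    coeff 3 (affineRep σ τ ⁅⁅⁅g₁, g₂⁆, g₂⁆, g₁⁆).m = (σ * a + τ * b) * (σ * c + τ * d) *
      ((σ * a + τ * b) * (c + d) - (σ * c + τ * d) * (a + b)) := by
  obtain ⟨δ₁, hδ₁, hc₁⟩ := exists_affineRep_u_eq h₁ σ τ
  obtain ⟨δ₂, hδ₂, hc₂⟩ := exists_affineRep_u_eq h₂ σ τ
  simp only [map_commutatorElement]
  rw [Aff.coeff_three_commutatorElement hδ₁ hδ₂, hc₁, hc₂, constantCoeff_affineRep_m h₁,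
    constantCoeff_affineRep_m h₂]

/-- In the free metabelian group `M₂` of rank 2 with basis `z₁, z₂`: if
`[g₁,g₂,g₂,g₁] = [z₁,z₂,z₂,z₁]`, then `gᵢ ≡ zᵢ^{εᵢ} (mod M₂')` with `εᵢ = ±1`. -/
theorem metabelian_commutator_rigidity (g₁ g₂ : FreeSolvable 2 2)
    (hyp : ⁅⁅⁅g₁, g₂⁆, g₂⁆, g₁⁆ =
      ⁅⁅⁅FreeSolvable.gen 2 2 0, FreeSolvable.gen 2 2 1⁆, FreeSolvable.gen 2 2 1⁆,
        FreeSolvable.gen 2 2 0⁆) :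
    ∃ ε₁ ε₂ : ℤ, (ε₁ = 1 ∨ ε₁ = -1) ∧ (ε₂ = 1 ∨ ε₂ = -1) ∧
      g₁ * ((FreeSolvable.gen 2 2 0) ^ ε₁)⁻¹ ∈ commutator (FreeSolvable 2 2) ∧
      g₂ * ((FreeSolvable.gen 2 2 1) ^ ε₂)⁻¹ ∈ commutator (FreeSolvable 2 2) := by
  obtain ⟨a, b, h₁⟩ := g₁.exists_abelianExponents
  obtain ⟨c, d, h₂⟩ := g₂.exists_abelianExponents
  have hz₁ : (FreeSolvable.gen 2 2 0).AbelianExponents 1 0 := by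
    simp [FreeSolvable.AbelianExponents]
  have hz₂ : (FreeSolvable.gen 2 2 1).AbelianExponents 0 1 := by
    simp [FreeSolvable.AbelianExponents]
  obtain ⟨ha, rfl, rfl, hd⟩ :=
    Int.diagonal_signs_of_forall_cubic_identity (a := a) (b := b) (c := c) (d := d) fun σ τ => by
      rw [← coeff_three_affineRep_commutatorElement h₁ h₂, hyp,
        coeff_three_affineRep_commutatorElement hz₁ hz₂]
      ring
  refine ⟨a, d, ha, hd, ?_, ?_⟩ <;>
    simp_all [← Abelianization.ker_of, FreeSolvable.AbelianExponents]
end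

section
/- In the free group F_r, the map from a finitely generated group to its abelianization carries bases to bases: any basis of the free abelian group F_r/F_r' lifts to a basis of F_r. More generally, in the free solvable group G = S_{r,d}, every basis of the abelianization G/G' is induced by some basis of G. -/
/-!
An automorphism of the abelianization `ℤ^r` of `F_r` is an invertible integer matrix. Euclid's
algorithm, run on one column at a time, reduces it to the identity by row operations, so it is a
product of transvections and sign changes. Each of these is induced by an elementary Nielsen
automorphism of `F_r` (`x_j ↦ x_j x_i^c`, resp. `x_i ↦ x_i⁻¹`), hence `Aut F_r → Aut F_r^ab` is
onto, and the image of the standard basis under a lift of `e` is a basis lifting `e(x_i)`.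
For `d ≥ 1` the subgroup `F_r^(d)` is characteristic and contained in `[F_r, F_r]`, so `S_{r,d}`
has the same abelianization as `F_r` and every automorphism of `F_r` descends to `S_{r,d}`;
for `d = 0` the group is trivial.
-/

namespace Matrix

variable {n : Type*} [Fintype n] [DecidableEq n]

def signFlip (i : n) : Matrix n n ℤ :=
  diagonal (Pi.mulSingle i (-1))

theorem signFlip_mul_apply (i : n) (M : Matrix n n ℤ) (a b : n) :
    (signFlip i * M) a b = if a = i then -M a b else M a b := by
  by_cases h : a = i <;> simp [signFlip, diagonal_mul, h]

theorem signFlip_mul_self (i : n) : signFlip i * signFlip i = 1 := by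
  rw [signFlip, diagonal_mul_diagonal, ← diagonal_one]
  congr 1
  ext j
  by_cases h : j = i <;> simp [h]

inductive IntRowStep : Matrix n n ℤ → Matrix n n ℤ → Prop
  | transvection {i j : n} (hij : i ≠ j) (c : ℤ) (M : Matrix n n ℤ) :
      IntRowStep M (transvection i j c * M)
  | signFlip (i : n) (M : Matrix n n ℤ) : IntRowStep M (signFlip i * M)

abbrev IntRowReduces : Matrix n n ℤ → Matrix n n ℤ → Prop :=
  Relation.ReflTransGen IntRowStep

theorem IntRowStep.isUnit_det {M N : Matrix n n ℤ} (h : IntRowStep M N) (hM : IsUnit M.det) :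
    IsUnit N.det := by
  rcases h with ⟨hij, c, M⟩ | ⟨i, M⟩
  · rwa [det_mul, det_transvection_of_ne _ _ hij, one_mul]
  · rw [det_mul]
    exact (isUnit_det_of_left_inverse (signFlip_mul_self i)).mul hM

theorem IntRowReduces.isUnit_det {M N : Matrix n n ℤ} (h : IntRowReduces M N)
    (hM : IsUnit M.det) : IsUnit N.det := by
  induction h with
  | refl => exact hM
  | tail _ hstep ih => exact hstep.isUnit_det ih

section ColsEqOneOutside

variable {R : Type*} [CommRing R]

def ColsEqOneOutside (s : Finset n) (M : Matrix n n R) : Prop :=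
  ∀ i, ∀ j ∉ s, M i j = (1 : Matrix n n R) i j

theorem ColsEqOneOutside.transvection_mul {s : Finset n} {M : Matrix n n R}
    (hM : ColsEqOneOutside s M) (i : n) {j : n} (hj : j ∈ s) (c : R) :
    ColsEqOneOutside s (transvection i j c * M) := by
  intro a b hb
  rcases eq_or_ne a i with rfl | ha
  · rw [transvection_mul_apply_same, hM a b hb, hM j b hb,
      one_apply_ne (ne_of_mem_of_not_mem hj hb), mul_zero, add_zero]
  · rw [transvection_mul_apply_of_ne _ _ _ _ ha, hM a b hb]

/-- Row `k` of `M⁻¹` vanishes outside `s`, so `(M⁻¹ * M) k k = 1` collapses to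
`M⁻¹ k p * M p k = 1`. -/
theorem ColsEqOneOutside.isUnit_apply {s : Finset n} {M : Matrix n n R}
    (hM : ColsEqOneOutside s M) (hdet : IsUnit M.det) {k p : n} (hk : k ∈ s)
    (hp : ∀ i ∈ s, i ≠ p → M i k = 0) : IsUnit (M p k) := by
  have hinv := congrFun (congrFun (nonsing_inv_mul M hdet) k)
  have hrow : ∀ j ∉ s, M⁻¹ k j = 0 := fun j hj => by
    have := hinv j
    rwa [mul_apply, Finset.sum_eq_single j (fun i _ hij => by rw [hM i j hj, one_apply_ne hij,
      mul_zero]) (by simp), hM j j hj, one_apply_eq, mul_one,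
      one_apply_ne (ne_of_mem_of_not_mem hk hj)] at this
  have hone := hinv k
  rw [mul_apply, one_apply_eq, Finset.sum_eq_single p (fun i _ hip => by
    by_cases hi : i ∈ s
    · rw [hp i hi hip, mul_zero]
    · rw [hrow i hi, zero_mul]) (by simp)] at hone
  exact IsUnit.of_mul_eq_one_right _ hone

end ColsEqOneOutside

theorem ColsEqOneOutside.signFlip_mul {s : Finset n} {M : Matrix n n ℤ}
    (hM : ColsEqOneOutside s M) {i : n} (hi : i ∈ s) : ColsEqOneOutside s (signFlip i * M) := by
  intro a b hb
  rw [signFlip_mul_apply, hM a b hb]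
  split_ifs with ha
  · rw [ha, one_apply_ne (ne_of_mem_of_not_mem hi hb), neg_zero]
  · rfl

theorem sum_natAbs_transvection_mul_lt {s : Finset n} {M : Matrix n n ℤ} {i j k : n}
    (hi : i ∈ s) (hj : M j k ≠ 0) (hle : (M j k).natAbs ≤ (M i k).natAbs) :
    ∑ a ∈ s, ((transvection i j (-(M i k / M j k)) * M) a k).natAbs
      < ∑ a ∈ s, (M a k).natAbs := by
  rw [← Finset.add_sum_erase s _ hi, ← Finset.add_sum_erase s _ hi,
    Finset.sum_congr rfl fun a ha => by
      rw [transvection_mul_apply_of_ne _ _ _ _ (Finset.ne_of_mem_erase ha)]]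
  have hmod : (transvection i j (-(M i k / M j k)) * M) i k = M i k % M j k := by
    rw [transvection_mul_apply_same, Int.emod_def]
    ring
  have hlt : (M i k % M j k).natAbs < (M j k).natAbs := by
    rw [← Int.natAbs_abs (M j k)]
    exact Int.natAbs_lt_natAbs_of_nonneg_of_lt (Int.emod_nonneg _ hj) (Int.emod_lt_abs _ hj)
  omega

theorem ColsEqOneOutside.exists_intRowReduces_single_nonzero {s : Finset n} {M : Matrix n n ℤ}
    (hM : ColsEqOneOutside s M) {k : n} (hk : k ∈ s) :
    ∃ N, IntRowReduces M N ∧ ColsEqOneOutside s N ∧ ∃ p ∈ s, ∀ i ∈ s, i ≠ p → N i k = 0 := by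
  induction hμ : ∑ i ∈ s, (M i k).natAbs using Nat.strong_induction_on generalizing M with
  | _ μ ih =>
  by_cases h : ∃ i ∈ s, ∃ j ∈ s, i ≠ j ∧ M i k ≠ 0 ∧ M j k ≠ 0
  · obtain ⟨i, hi, j, hj, hij, hi0, hj0⟩ := h
    have reduce : ∀ i ∈ s, ∀ j ∈ s, i ≠ j → M j k ≠ 0 → (M j k).natAbs ≤ (M i k).natAbs →
        ∃ N, IntRowReduces M N ∧ ColsEqOneOutside s N ∧ ∃ p ∈ s, ∀ i ∈ s, i ≠ p → N i k = 0 := by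
      intro i hi j hj hij hj0 hle
      obtain ⟨N, hN, hNs, hNp⟩ := ih _ (hμ ▸ sum_natAbs_transvection_mul_lt hi hj0 hle)
        (hM.transvection_mul i hj _) rfl
      exact ⟨N, .head (.transvection hij _ M) hN, hNs, hNp⟩
    rcases le_total (M j k).natAbs (M i k).natAbs with hle | hle
    · exact reduce i hi j hj hij hj0 hle
    · exact reduce j hj i hi hij.symm hi0 hle
  · push Not at h
    refine ⟨M, .refl, hM, ?_⟩
    by_cases hp : ∃ p ∈ s, M p k ≠ 0
    · obtain ⟨p, hp, hp0⟩ := hp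
      exact ⟨p, hp, fun i hi hip => by_contra fun hi0 => hp0 (h i hi p hp hip hi0)⟩
    · push Not at hp
      exact ⟨k, hk, fun i hi _ => hp i hi⟩

theorem ColsEqOneOutside.exists_intRowReduces_erase_of_apply_self_eq_one {s : Finset n}
    {M : Matrix n n ℤ} (hM : ColsEqOneOutside s M) {k : n} (hk : k ∈ s) (hkk : M k k = 1) :
    ∃ N, IntRowReduces M N ∧ ColsEqOneOutside (s.erase k) N := by
  suffices ∀ t : Finset n, ∀ M : Matrix n n ℤ, ColsEqOneOutside s M → M k k = 1 →
      (∀ i ∉ t, i ≠ k → M i k = 0) → ∃ N, IntRowReduces M N ∧ ColsEqOneOutside (s.erase k) N from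
    this Finset.univ M hM hkk (by simp)
  intro t
  induction t using Finset.induction_on with
  | empty =>
    intro M hM hkk hzero
    refine ⟨M, .refl, fun i j hj => ?_⟩
    rcases eq_or_ne j k with rfl | hjk
    · rcases eq_or_ne i j with rfl | hij
      · rw [hkk, one_apply_eq]
      · rw [hzero i (Finset.notMem_empty i) hij, one_apply_ne hij]
    · exact hM i j fun hjs => hj (Finset.mem_erase.2 ⟨hjk, hjs⟩)
  | insert a t _ ih =>
    intro M hM hkk hzero
    rcases eq_or_ne a k with rfl | hak
    · exact ih M hM hkk fun i hi hia => hzero i (by simp [hi, hia]) hia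
    obtain ⟨N, hN, hNs⟩ := ih (transvection a k (-M a k) * M) (hM.transvection_mul a hk _)
      (by rw [transvection_mul_apply_of_ne _ _ _ _ hak.symm, hkk])
      (fun i hi hik => by
        rcases eq_or_ne i a with rfl | hia
        · rw [transvection_mul_apply_same, hkk]
          ring
        · rw [transvection_mul_apply_of_ne _ _ _ _ hia, hzero i (by simp [hi, hia]) hik])
    exact ⟨N, .head (.transvection hak _ M) hN, hNs⟩

theorem ColsEqOneOutside.exists_intRowReduces_erase {s : Finset n} {M : Matrix n n ℤ}
    (hM : ColsEqOneOutside s M) (hdet : IsUnit M.det) {k : n} (hk : k ∈ s) :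
    ∃ N, IntRowReduces M N ∧ ColsEqOneOutside (s.erase k) N := by
  obtain ⟨M₁, h₁, hM₁, p, hp, hzero⟩ := hM.exists_intRowReduces_single_nonzero hk
  have hunit := hM₁.isUnit_apply (h₁.isUnit_det hdet) hk hzero
  obtain ⟨M₂, h₂, hM₂, hp₂⟩ :
      ∃ M₂, IntRowReduces M₁ M₂ ∧ ColsEqOneOutside s M₂ ∧ M₂ p k = 1 := by
    rcases Int.isUnit_iff.1 hunit with h | h
    · exact ⟨M₁, .refl, hM₁, h⟩
    · exact ⟨signFlip p * M₁, .single (.signFlip p M₁), hM₁.signFlip_mul hp,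
        by rw [signFlip_mul_apply, if_pos rfl, h, neg_neg]⟩
  obtain ⟨M₃, h₃, hM₃, hk₃⟩ :
      ∃ M₃, IntRowReduces M₂ M₃ ∧ ColsEqOneOutside s M₃ ∧ M₃ k k = 1 := by
    rcases eq_or_ne p k with rfl | hpk
    · exact ⟨M₂, .refl, hM₂, hp₂⟩
    · refine ⟨transvection k p (1 - M₂ k k) * M₂, .single (.transvection hpk.symm _ _),
        hM₂.transvection_mul k hp _, ?_⟩
      rw [transvection_mul_apply_same, hp₂]
      ring
  obtain ⟨N, h₄, hN⟩ := hM₃.exists_intRowReduces_erase_of_apply_self_eq_one hk hk₃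
  exact ⟨N, h₁.trans (h₂.trans (h₃.trans h₄)), hN⟩

theorem intRowReduces_one_of_isUnit_det {M : Matrix n n ℤ} (hdet : IsUnit M.det) :
    IntRowReduces M 1 := by
  suffices ∀ s : Finset n, ∀ M : Matrix n n ℤ, ColsEqOneOutside s M → IsUnit M.det →
      IntRowReduces M 1 from
    this Finset.univ M (fun _ j hj => absurd (Finset.mem_univ j) hj) hdet
  intro s
  induction s using Finset.induction_on with
  | empty =>
    intro M hM _
    rw [show M = 1 from ext fun i j => hM i j (Finset.notMem_empty j)]
  | insert k s hks ih =>
    intro M hM hdet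
    obtain ⟨N, hMN, hN⟩ := hM.exists_intRowReduces_erase hdet (Finset.mem_insert_self k s)
    rw [Finset.erase_insert hks] at hN
    exact hMN.trans (ih N hN (hMN.isUnit_det hdet))

theorem mem_mrange_of_isUnit_det {G : Type*} [Group G] (Ψ : G →* Matrix n n ℤ)
    (htransvection : ∀ i j : n, i ≠ j → ∀ c : ℤ, transvection i j c ∈ MonoidHom.mrange Ψ)
    (hsignFlip : ∀ i : n, signFlip i ∈ MonoidHom.mrange Ψ) {M : Matrix n n ℤ}
    (hM : IsUnit M.det) : M ∈ MonoidHom.mrange Ψ := by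
  have cancel {T N : Matrix n n ℤ} (hT : T ∈ MonoidHom.mrange Ψ)
      (hTN : T * N ∈ MonoidHom.mrange Ψ) : N ∈ MonoidHom.mrange Ψ := by
    obtain ⟨g, rfl⟩ := hT
    obtain ⟨h, hh⟩ := hTN
    exact ⟨g⁻¹ * h, by rw [map_mul, hh, ← mul_assoc, ← map_mul, inv_mul_cancel, map_one, one_mul]⟩
  have hred := intRowReduces_one_of_isUnit_det hM
  clear hM
  induction hred using Relation.ReflTransGen.head_induction_on with
  | refl => exact one_mem _
  | head hstep _ ih =>
    rcases hstep with ⟨hij, c, M⟩ | ⟨i, M⟩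
    · exact cancel (htransvection _ _ hij c) ih
    · exact cancel (hsignFlip i) ih

end Matrix

namespace FreeGroup

variable {α : Type*} [DecidableEq α]

def transvectionHom (i j : α) (c : ℤ) : FreeGroup α →* FreeGroup α :=
  lift (Function.update of j (of j * of i ^ c))

theorem transvectionHom_comp {i j : α} (hij : i ≠ j) (c d : ℤ) :
    (transvectionHom i j c).comp (transvectionHom i j d) = transvectionHom i j (c + d) := by
  ext k
  rcases eq_or_ne k j with rfl | hk
  · simp [transvectionHom, hij, zpow_add, mul_assoc]
  · simp [transvectionHom, hk]

theorem transvectionHom_zero (i j : α) : transvectionHom i j 0 = MonoidHom.id _ := by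
  ext k
  rcases eq_or_ne k j with rfl | hk <;> simp [transvectionHom, *]

def transvection {i j : α} (hij : i ≠ j) (c : ℤ) : MulAut (FreeGroup α) :=
  MonoidHom.toMulEquiv (transvectionHom i j c) (transvectionHom i j (-c))
    (by rw [transvectionHom_comp hij, neg_add_cancel, transvectionHom_zero])
    (by rw [transvectionHom_comp hij, add_neg_cancel, transvectionHom_zero])

theorem transvection_of {i j : α} (hij : i ≠ j) (c : ℤ) (k : α) :
    transvection hij c (of k) = if k = j then of j * of i ^ c else of k := by
  rcases eq_or_ne k j with rfl | hk <;> simp [transvection, transvectionHom, *]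

def signFlipHom (i : α) : FreeGroup α →* FreeGroup α :=
  lift (Function.update of i (of i)⁻¹)

theorem signFlipHom_comp_self (i : α) :
    (signFlipHom i).comp (signFlipHom i) = MonoidHom.id _ := by
  ext k
  rcases eq_or_ne k i with rfl | hk <;> simp [signFlipHom, *]

def signFlip (i : α) : MulAut (FreeGroup α) :=
  MonoidHom.toMulEquiv (signFlipHom i) (signFlipHom i) (signFlipHom_comp_self i)
    (signFlipHom_comp_self i)

theorem signFlip_of (i k : α) : signFlip i (of k) = if k = i then (of i)⁻¹ else of k := by
  rcases eq_or_ne k i with rfl | hk <;> simp [signFlip, signFlipHom, *]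

end FreeGroup

def MulAut.toAbelianization (G : Type*) [Group G] : MulAut G →* MulAut (Abelianization G) where
  toFun := MulEquiv.abelianizationCongr
  map_one' := abelianizationCongr_refl
  map_mul' e f := (abelianizationCongr_trans f e).symm

namespace FreeGroup

noncomputable def abelianizationBasis (α : Type*) :
    Module.Basis α ℤ (Additive (Abelianization (FreeGroup α))) :=
  FreeAbelianGroup.basis α

theorem abelianizationBasis_apply {α : Type*} (k : α) :
    abelianizationBasis α k = Additive.ofMul (Abelianization.of (of k)) := by
  change FreeAbelianGroup.basis α k = FreeAbelianGroup.of k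
  simp [FreeAbelianGroup.basis]

theorem abelianizationBasis_repr_of {α : Type*} (k : α) :
    (abelianizationBasis α).repr (Additive.ofMul (Abelianization.of (of k))) =
      Finsupp.single k 1 := by
  rw [← abelianizationBasis_apply, Module.Basis.repr_self]

variable (α : Type*) [Fintype α] [DecidableEq α]

noncomputable def abelianizationAutMatrix :
    MulAut (Abelianization (FreeGroup α)) →* Matrix α α ℤ where
  toFun e := LinearMap.toMatrix (abelianizationBasis α) (abelianizationBasis α)
    (MulEquiv.toAdditive e).toIntLinearEquiv.toLinearMap
  map_one' := LinearMap.toMatrix_id _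
  map_mul' e f := by
    rw [← LinearMap.toMatrix_comp]
    rfl

variable {α}

theorem abelianizationAutMatrix_eq (e : MulAut (Abelianization (FreeGroup α))) :
    abelianizationAutMatrix α e = LinearMap.toMatrix (abelianizationBasis α)
      (abelianizationBasis α) (MulEquiv.toAdditive e).toIntLinearEquiv.toLinearMap :=
  rfl

theorem abelianizationAutMatrix_apply (e : MulAut (Abelianization (FreeGroup α))) (i j : α) :
    abelianizationAutMatrix α e i j =
      (abelianizationBasis α).repr (Additive.ofMul (e (Abelianization.of (of j)))) i := by
  rw [abelianizationAutMatrix_eq, LinearMap.toMatrix_apply, abelianizationBasis_apply]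
  rfl

theorem abelianizationAutMatrix_injective : Function.Injective (abelianizationAutMatrix α) := by
  intro e f h
  have := (LinearMap.toMatrix _ _).injective h
  ext x
  exact congrArg Additive.toMul (LinearMap.congr_fun this (Additive.ofMul x))

theorem isUnit_det_abelianizationAutMatrix (e : MulAut (Abelianization (FreeGroup α))) :
    IsUnit (abelianizationAutMatrix α e).det := by
  rw [abelianizationAutMatrix_eq, LinearMap.det_toMatrix]
  exact LinearEquiv.isUnit_det' _

theorem abelianizationAutMatrix_transvection {i j : α} (hij : i ≠ j) (c : ℤ) :
    abelianizationAutMatrix α (MulAut.toAbelianization _ (transvection hij c)) =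
      Matrix.transvection i j c := by
  ext a b
  rw [abelianizationAutMatrix_apply]
  change (abelianizationBasis α).repr
    (Additive.ofMul (Abelianization.of (transvection hij c (of b)))) a = _
  rw [transvection_of, Matrix.transvection, Matrix.add_apply, Matrix.one_apply,
    Matrix.single_apply]
  rcases eq_or_ne b j with rfl | hb
  · rw [if_pos rfl, _root_.map_mul, _root_.map_zpow, ofMul_mul, ofMul_zpow, map_add, map_zsmul,
      abelianizationBasis_repr_of, abelianizationBasis_repr_of]
    by_cases hab : a = b <;> by_cases hai : a = i <;> simp_all [Finsupp.single_apply, eq_comm]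
  · simp [abelianizationBasis_repr_of, Finsupp.single_apply, hb, hb.symm, eq_comm]

theorem abelianizationAutMatrix_signFlip (i : α) :
    abelianizationAutMatrix α (MulAut.toAbelianization _ (signFlip i)) = Matrix.signFlip i := by
  ext a b
  rw [abelianizationAutMatrix_apply]
  change (abelianizationBasis α).repr
    (Additive.ofMul (Abelianization.of (signFlip i (of b)))) a = _
  rw [signFlip_of, Matrix.signFlip, Matrix.diagonal_apply]
  rcases eq_or_ne b i with rfl | hb
  · rw [if_pos rfl, _root_.map_inv, ofMul_inv, map_neg, abelianizationBasis_repr_of]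
    by_cases hab : a = b <;> simp [hab]
  · by_cases hab : a = b <;> simp [abelianizationBasis_repr_of, hab, hb]

variable (α)

theorem abelianizationCongr_surjective :
    Function.Surjective (MulEquiv.abelianizationCongr (G := FreeGroup α) (H := FreeGroup α)) := by
  intro e
  obtain ⟨E, hE⟩ := Matrix.mem_mrange_of_isUnit_det
    ((abelianizationAutMatrix α).comp (MulAut.toAbelianization _))
    (fun _ _ hij c => ⟨transvection hij c, abelianizationAutMatrix_transvection hij c⟩)
    (fun i => ⟨signFlip i, abelianizationAutMatrix_signFlip i⟩)
    (isUnit_det_abelianizationAutMatrix e)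
  exact ⟨E, abelianizationAutMatrix_injective hE⟩

end FreeGroup

def Abelianization.quotientEquivOfLECommutator {G : Type*} [Group G] (N : Subgroup G) [N.Normal]
    (hN : N ≤ commutator G) : Abelianization (G ⧸ N) ≃* Abelianization G :=
  MonoidHom.toMulEquiv (Abelianization.lift (QuotientGroup.lift N Abelianization.of
      (hN.trans (Abelianization.ker_of G).ge)))
    (Abelianization.map (QuotientGroup.mk' N))
    (Abelianization.hom_ext _ _ (QuotientGroup.monoidHom_ext _ rfl))
    (Abelianization.hom_ext _ _ rfl)

section LiftAutomorphisms

variable {G : Type*} [Group G]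

theorem abelianizationCongr_surjective_of_subsingleton [Subsingleton G] :
    Function.Surjective (MulEquiv.abelianizationCongr (G := G) (H := G)) := by
  intro e
  refine ⟨MulEquiv.refl G, MulEquiv.toMonoidHom_injective
    (Abelianization.hom_ext _ _ (MonoidHom.ext fun y => ?_))⟩
  rw [Subsingleton.elim y 1, map_one, map_one]

theorem abelianizationCongr_surjective_quotient {N : Subgroup G} [N.Characteristic]
    (hN : N ≤ commutator G)
    (h : Function.Surjective (MulEquiv.abelianizationCongr (G := G) (H := G))) :
    Function.Surjective (MulEquiv.abelianizationCongr (G := G ⧸ N) (H := G ⧸ N)) := by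
  intro e
  let β := Abelianization.quotientEquivOfLECommutator N hN
  obtain ⟨E, hE⟩ := h (β.symm.trans (e.trans β))
  refine ⟨QuotientGroup.congr N N E (Subgroup.characteristic_iff_map_eq.1 ‹_› E), ?_⟩
  apply MulEquiv.toMonoidHom_injective
  apply Abelianization.hom_ext
  apply QuotientGroup.monoidHom_ext
  ext g
  exact (congrArg (fun f => β.symm (f (Abelianization.of g))) hE).trans (β.symm_apply_apply _)

theorem exists_lift_of_abelianizationCongr_surjective {ι : Type*}
    (h : Function.Surjective (MulEquiv.abelianizationCongr (G := G) (H := G))) (x : ι → G)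
    {a : ι → Abelianization G}
    (ha : ∃ e : Abelianization G ≃* Abelianization G, ∀ i, e (Abelianization.of (x i)) = a i) :
    ∃ b : ι → G, (∃ E : G ≃* G, ∀ i, E (x i) = b i) ∧ ∀ i, Abelianization.of (b i) = a i := by
  obtain ⟨e, he⟩ := ha
  obtain ⟨E, rfl⟩ := h e
  exact ⟨fun i => E (x i), ⟨E, fun _ => rfl⟩, he⟩

end LiftAutomorphisms

theorem FreeSolvable.abelianizationCongr_surjective (r d : ℕ) :
    Function.Surjective
      (MulEquiv.abelianizationCongr (G := FreeSolvable r d) (H := FreeSolvable r d)) := by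
  cases d with
  | zero =>
    have : Subsingleton (FreeSolvable r 0) := QuotientGroup.subsingleton_quotient_top
    exact abelianizationCongr_surjective_of_subsingleton
  | succ d =>
    exact abelianizationCongr_surjective_quotient
      ((derivedSeries_antitone _ (Nat.le_add_left 1 d)).trans (derivedSeries_one _).le)
      (FreeGroup.abelianizationCongr_surjective (Fin r))

/-- Bases of the abelianization lift to bases: in the free group `F_r` and, more
generally, in the free solvable group `S_{r,d}`, every basis of the abelianization
(a free abelian group of rank `r`) is induced by a basis of the group. Here a basis is
a family obtained from the canonical basis by an automorphism. -/
theorem basis_of_abelianization_lifts (r d : ℕ) :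
    (∀ a : Fin r → Abelianization (FreeGroup (Fin r)),
      (∃ e : Abelianization (FreeGroup (Fin r)) ≃* Abelianization (FreeGroup (Fin r)),
        ∀ i, e (Abelianization.of (FreeGroup.of i)) = a i) →
      ∃ b : Fin r → FreeGroup (Fin r),
        (∃ e : FreeGroup (Fin r) ≃* FreeGroup (Fin r), ∀ i, e (FreeGroup.of i) = b i) ∧
        ∀ i, Abelianization.of (b i) = a i) ∧
    (∀ a : Fin r → Abelianization (FreeSolvable r d),
      (∃ e : Abelianization (FreeSolvable r d) ≃* Abelianization (FreeSolvable r d),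
        ∀ i, e (Abelianization.of (FreeSolvable.gen r d i)) = a i) →
      ∃ b : Fin r → FreeSolvable r d,
        (∃ e : FreeSolvable r d ≃* FreeSolvable r d,
          ∀ i, e (FreeSolvable.gen r d i) = b i) ∧
        ∀ i, Abelianization.of (b i) = a i) := by
  exact ⟨fun _ => exists_lift_of_abelianizationCongr_surjective
      (FreeGroup.abelianizationCongr_surjective (Fin r)) FreeGroup.of,
    fun _ => exists_lift_of_abelianizationCongr_surjective
      (FreeSolvable.abelianizationCongr_surjective r d) (FreeSolvable.gen r d)⟩
end
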